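/- arXiv:1504.04133 — 4 statements merged into one kernel-verified Lean document; each statement's English description precedes it below -/
import Mathlib

section
/- For every natural number n and all indices i, j ∈ Fin 2^n, the entry G_{i,j} of the polar generator matrix G = F^{⊗n} over GF(2) satisfies G_{i,j} = ∏_{m=0}^{n-1} (1 + b_m(j) + b_m(j)·b_m(i)) in ZMod 2, where b_m(k) ∈ {0,1} denotes the m-th binary digit of k; equivalently, G_{i,j} = 1 if and only if every bit position m < n at which j has a 1 is also a 1 of i (i.e., Nat.land j i = j). -/
/-- The basic polar kernel `F = [[1,0],[1,1]]` over `GF(2)`. -/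
def polarF : Matrix (Fin 2) (Fin 2) (ZMod 2) := !![1, 0; 1, 1]

/-- The `n`-fold Kronecker power `G = F^{⊗n}` of the polar kernel over `GF(2)`,
indexed by `Fin (2^n)` (0-indexed), where the first Kronecker factor corresponds
to the most significant bit of the index. -/
def polarG : (n : ℕ) → Matrix (Fin (2 ^ n)) (Fin (2 ^ n)) (ZMod 2)
  | 0 => 1
  | n + 1 =>
    Matrix.reindex
      (finProdFinEquiv.trans (finCongr (by ring)))
      (finProdFinEquiv.trans (finCongr (by ring)))
      (Matrix.kroneckerMap (· * ·) polarF (polarG n))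

/-- The `m`-th binary digit of `k`, as an element of `ZMod 2`. -/
def bitZ (m k : ℕ) : ZMod 2 := if Nat.testBit k m then 1 else 0

/-! The entry `G_{i,j}` factors over the binary digits of `i` and `j`: unfolding one Kronecker
factor splits an index of `Fin (2^(n+1))` into its top bit (the row/column of `F`) and its
remainder mod `2^n` (the row/column of `F^{⊗n}`), and `F_{a,b} = 1 + b + b a`. Over `GF(2)`
each factor is `0` exactly when `b_m(j) = 1` and `b_m(i) = 0`, so the product is `1` iff the
bits of `j` are among those of `i`. -/

theorem Nat.land_eq_left_iff_forall_testBit {n j : ℕ} (i : ℕ) (hj : j < 2 ^ n) :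
    j &&& i = j ↔ ∀ m < n, j.testBit m → i.testBit m := by
  constructor
  · intro h m _ hjm
    simpa [Nat.testBit_land, hjm] using congrArg (Nat.testBit · m) h
  · intro h
    refine Nat.eq_of_testBit_eq fun m => ?_
    rw [Nat.testBit_land]
    by_cases hm : m < n
    · cases hjm : j.testBit m
      · rfl
      · simp [h m hm hjm]
    · have : j.testBit m = false :=
        Nat.testBit_lt_two_pow (hj.trans_le (Nat.pow_le_pow_right two_pos (not_lt.mp hm)))
      simp [this]

theorem bitZ_mod_two_pow {m n : ℕ} (k : ℕ) (hm : m < n) : bitZ m (k % 2 ^ n) = bitZ m k := by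
  simp [bitZ, Nat.testBit_mod_two_pow, hm]

theorem bitZ_eq_div_two_pow {n k : ℕ} (hk : k < 2 ^ (n + 1)) :
    bitZ n k = ((k / 2 ^ n : ℕ) : ZMod 2) := by
  have : k / 2 ^ n < 2 := Nat.div_lt_of_lt_mul (by rwa [← pow_succ])
  rw [bitZ, Nat.testBit_eq_decide_div_mod_eq]
  interval_cases k / 2 ^ n <;> decide

theorem one_add_bitZ_add_bitZ_mul (m j i : ℕ) :
    1 + bitZ m j + bitZ m j * bitZ m i = if j.testBit m → i.testBit m then 1 else 0 := by
  unfold bitZ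
  cases j.testBit m <;> cases i.testBit m <;> decide

theorem polarF_apply (a b : Fin 2) :
    polarF a b = 1 + ((b : ℕ) : ZMod 2) + ((b : ℕ) : ZMod 2) * ((a : ℕ) : ZMod 2) := by
  fin_cases a <;> fin_cases b <;> decide

theorem polarG_succ_apply (n : ℕ) (i j : Fin (2 ^ (n + 1))) :
    polarG (n + 1) i j =
      polarF ⟨i / 2 ^ n, Nat.div_lt_of_lt_mul (pow_succ 2 n ▸ i.2)⟩
          ⟨j / 2 ^ n, Nat.div_lt_of_lt_mul (pow_succ 2 n ▸ j.2)⟩ *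
        polarG n ⟨i % 2 ^ n, Nat.mod_lt _ (by positivity)⟩
          ⟨j % 2 ^ n, Nat.mod_lt _ (by positivity)⟩ :=
  rfl

theorem polarG_apply (n : ℕ) (i j : Fin (2 ^ n)) :
    polarG n i j = ∏ m ∈ Finset.range n, (1 + bitZ m j + bitZ m j * bitZ m i) := by
  induction n with
  | zero =>
    obtain rfl : i = j := Subsingleton.elim (α := Fin 1) i j
    simp [polarG]
  | succ n ih =>
    rw [polarG_succ_apply, ih, polarF_apply, Finset.prod_range_succ, mul_comm,
      ← bitZ_eq_div_two_pow i.2, ← bitZ_eq_div_two_pow j.2]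
    congr 1
    refine Finset.prod_congr rfl fun m hm => ?_
    simp only [bitZ_mod_two_pow _ (Finset.mem_range.mp hm)]

/-- the entries of `G = F^{⊗n}` are given by the bit-product formula
`G_{i,j} = ∏_{m=0}^{n-1} (1 + b_m(j) + b_m(j)·b_m(i))`; equivalently,
`G_{i,j} = 1` iff every bit of `j` is also a bit of `i`, i.e. `j AND i = j`. -/
theorem polarG_entry_formula (n : ℕ) (i j : Fin (2 ^ n)) :
    polarG n i j =
      ∏ m ∈ Finset.range n, (1 + bitZ m (j : ℕ) + bitZ m (j : ℕ) * bitZ m (i : ℕ)) ∧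
    (polarG n i j = 1 ↔ Nat.land (j : ℕ) (i : ℕ) = (j : ℕ)) := by
  refine ⟨polarG_apply n i j, ?_⟩
  rw [polarG_apply, Finset.prod_congr rfl fun m _ => one_add_bitZ_add_bitZ_mul m j i,
    Finset.prod_boole, show Nat.land j i = j &&& i from rfl,
    Nat.land_eq_left_iff_forall_testBit _ j.2]
  split_ifs with h <;> simpa using h
end

section
/- (Proposition 1) For every natural number n and every column index j ∈ Fin 2^n, the number of nonzero entries in column j of the polar generator matrix G = F^{⊗n} over GF(2) equals 2^(n − s(j)), where s(j) is the number of 1s in the n-bit binary expansion of j; that is, the column Hamming weight is 2 raised to the Hamming weight of the complemented binary expansion of j. -/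
open Finset

theorem Matrix.card_filter_reindex_kroneckerMap_mul_ne_zero {R l l' m m' p p' : Type*}
    [MulZeroClass R] [NoZeroDivisors R] [DecidableEq R] [Fintype l] [Fintype m] [Fintype p]
    (A : Matrix l l' R) (B : Matrix m m' R) (e : l × m ≃ p) (e' : l' × m' ≃ p')
    (j : l') (k : m') :
    #{i | Matrix.reindex e e' (Matrix.kroneckerMap (· * ·) A B) i (e' (j, k)) ≠ 0} =
      #{i | A i j ≠ 0} * #{i | B i k ≠ 0} := by
  rw [← card_product, ← filter_product, univ_product_univ]
  refine (card_equiv e fun q => ?_).symm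
  simp

theorem polarF_card_filter_col_ne_zero (b : Fin 2) :
    #{a | polarF a b ≠ 0} = 2 ^ (1 - (b : ℕ)) := by
  decide +revert

theorem Nat.card_filter_range_testBit_le (x n : ℕ) : #{m ∈ range n | x.testBit m} ≤ n :=
  (card_filter_le _ _).trans (card_range n).le

theorem Nat.card_filter_range_succ_testBit_two_pow_mul_add {l n : ℕ} (a : ℕ) (hl : l < 2 ^ n) :
    #{m ∈ range (n + 1) | (2 ^ n * a + l).testBit m} = #{m ∈ range n | l.testBit m} + a % 2 := by
  have hlow : {m ∈ range n | (2 ^ n * a + l).testBit m} = {m ∈ range n | l.testBit m} :=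
    filter_congr fun m hm => by rw [Nat.testBit_two_pow_mul_add a hl, if_pos (mem_range.mp hm)]
  have htop : (2 ^ n * a + l).testBit n = decide (a % 2 = 1) := by
    rw [Nat.testBit_two_pow_mul_add a hl, if_neg (lt_irrefl n), Nat.sub_self, Nat.testBit_zero]
  rw [range_add_one, filter_insert, htop, hlow]
  rcases Nat.mod_two_eq_zero_or_one a with h | h
  · simp [h]
  · simp [h, card_insert_of_notMem]

/-- Proposition 1: the number of nonzero entries in column `j` of
`G = F^{⊗n}` equals `2^(n - s(j))`, where `s(j)` is the number of ones in the
`n`-bit binary expansion of `j` (so `n - s(j)` is the Hamming weight of the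
complemented expansion). -/
theorem polarG_column_weight (n : ℕ) (j : Fin (2 ^ n)) :
    (Finset.univ.filter fun i : Fin (2 ^ n) => polarG n i j ≠ 0).card =
      2 ^ (n - ((Finset.range n).filter fun m => Nat.testBit (j : ℕ) m).card) := by
  induction n with
  | zero => rw [Fin.fin_one_eq_zero j]; decide
  | succ n ih =>
    obtain ⟨⟨b, l⟩, rfl⟩ := (finProdFinEquiv.trans (finCongr (pow_succ' 2 n).symm)).surjective j
    rw [polarG, Matrix.card_filter_reindex_kroneckerMap_mul_ne_zero,
      polarF_card_filter_col_ne_zero, ih, ← pow_add]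
    have hval : ((finProdFinEquiv.trans (finCongr (pow_succ' 2 n).symm)) (b, l) : ℕ) =
        2 ^ n * b + l := by
      simp [add_comm]
    rw [hval, Nat.card_filter_range_succ_testBit_two_pow_mul_add _ l.2, Nat.mod_eq_of_lt b.2]
    have hs := Nat.card_filter_range_testBit_le l n
    have hb := b.2
    congr 1
    omega
end

section
/- (Corollary 2, BEC form) Let ε ∈ [0,1] be a real number and n a natural number. For every bit string b : Fin n → Bool, the value Z_ε(b) lies in [0,1]; moreover, for any two bit strings b, b' : Fin n → Bool such that b'_m = true implies b_m = true for every m (b dominates b'), one has Z_ε(b) ≤ Z_ε(b'). -/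
/-- The Bhattacharyya parameter of the BEC bit channel described by the bit string
`b : Fin n → Bool`: starting from the erasure probability `ε`, the bits are processed
from index `n-1` (most significant) down to index `0`, replacing the current value `z`
by `z^2` if the bit is `true` and by `2z - z^2` if the bit is `false`. -/
def Zrec (ε : ℝ) : (n : ℕ) → (Fin n → Bool) → ℝ
  | 0, _ => ε
  | n + 1, b =>
    let z := Zrec ε n fun m => b m.succ
    if b 0 then z ^ 2 else 2 * z - z ^ 2

/-! Both polarization steps `z ↦ z²` and `z ↦ 2z - z² = 1 - (1 - z)²` map `[0,1]` monotonically
into itself, and on `[0,1]` the `true` step never exceeds the `false` step. An induction on the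
length of the bit string then gives both claims. -/

open Set

def polarStep (bit : Bool) (z : ℝ) : ℝ :=
  if bit then z ^ 2 else 2 * z - z ^ 2

theorem polarStep_mem_Icc (bit : Bool) {z : ℝ} (hz : z ∈ Icc (0 : ℝ) 1) :
    polarStep bit z ∈ Icc (0 : ℝ) 1 := by
  obtain ⟨h0, h1⟩ := hz
  cases bit <;> simp only [polarStep, Bool.false_eq_true, if_false, if_true] <;>
    constructor <;> nlinarith

theorem polarStep_monotoneOn (bit : Bool) : MonotoneOn (polarStep bit) (Icc 0 1) := by
  intro x ⟨hx0, _⟩ y ⟨_, hy1⟩ hxy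
  cases bit <;> simp only [polarStep, Bool.false_eq_true, if_false, if_true]
  · -- `(2y - y²) - (2x - x²) = (y - x)(2 - x - y)`
    nlinarith
  · exact pow_le_pow_left₀ hx0 hxy 2

theorem polarStep_true_le_false {z : ℝ} (hz : z ∈ Icc (0 : ℝ) 1) :
    polarStep true z ≤ polarStep false z := by
  obtain ⟨h0, h1⟩ := hz
  simp only [polarStep, Bool.false_eq_true, if_false, if_true]
  nlinarith

theorem polarStep_le_polarStep {bit bit' : Bool} (hbit : bit' = true → bit = true) {x y : ℝ}
    (hx : x ∈ Icc (0 : ℝ) 1) (hy : y ∈ Icc (0 : ℝ) 1) (hxy : x ≤ y) :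
    polarStep bit x ≤ polarStep bit' y := by
  have hstep : polarStep bit y ≤ polarStep bit' y := by
    cases bit' with
    | true => rw [hbit rfl]
    | false => cases bit with
      | true => exact polarStep_true_le_false hy
      | false => exact le_rfl
  exact (polarStep_monotoneOn bit hx hy hxy).trans hstep

theorem Zrec_mem_Icc {ε : ℝ} (hε : ε ∈ Icc (0 : ℝ) 1) :
    ∀ (n : ℕ) (b : Fin n → Bool), Zrec ε n b ∈ Icc (0 : ℝ) 1
  | 0, _ => hε
  | n + 1, b => polarStep_mem_Icc (b 0) (Zrec_mem_Icc hε n (Fin.tail b))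

theorem Zrec_le_of_imp {ε : ℝ} (hε : ε ∈ Icc (0 : ℝ) 1) :
    ∀ (n : ℕ) (b b' : Fin n → Bool), (∀ m, b' m = true → b m = true) →
      Zrec ε n b ≤ Zrec ε n b'
  | 0, _, _, _ => le_rfl
  | n + 1, b, b', h =>
    polarStep_le_polarStep (h 0) (Zrec_mem_Icc hε n _) (Zrec_mem_Icc hε n _)
      (Zrec_le_of_imp hε n (Fin.tail b) (Fin.tail b') fun m => h m.succ)

/-- Corollary 2, BEC form: for `ε ∈ [0,1]`, every Bhattacharyya
parameter `Z_ε(b)` lies in `[0,1]`; moreover if `b` dominates `b'` (every `true`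
bit of `b'` is a `true` bit of `b`), then `Z_ε(b) ≤ Z_ε(b')`. -/
theorem Zrec_mem_Icc_and_monotone (ε : ℝ) (hε : ε ∈ Set.Icc (0 : ℝ) 1) (n : ℕ) :
    (∀ b : Fin n → Bool, Zrec ε n b ∈ Set.Icc (0 : ℝ) 1) ∧
    (∀ b b' : Fin n → Bool, (∀ m : Fin n, b' m = true → b m = true) →
      Zrec ε n b ≤ Zrec ε n b') :=
  ⟨Zrec_mem_Icc hε n, Zrec_le_of_imp hε n⟩
end

section
/- (All information bits in error) Let n ≥ 1, N = 2^n, and let A ⊆ Fin N be a set containing the last index N−1 and satisfying G_{i,j} = 0 for every j ∈ A and i ∉ A. Let v : Fin N → ZMod 2 be the indicator vector of A (v_i = 1 iff i ∈ A). Then the re-encoded vector q = vG satisfies q_j = 0 for every j ∈ A with j ≠ N−1, and q_{N−1} = 1; in particular the Hamming weight of q restricted to A equals 1. -/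
/-- The last index `2^n - 1` of `Fin (2^n)`. -/
def lastIdx (n : ℕ) : Fin (2 ^ n) := ⟨2 ^ n - 1, by have := Nat.two_pow_pos n; omega⟩

/-! The column sums of `G` are the indicator of the last column, since the column sums of `F`
are `(0, 1)` and column sums are multiplicative under Kronecker products. On a column `j ∈ A`
the hypothesis on `A` makes `(vG)_j` equal to the full column sum, hence `q_j = [j = N - 1]`. -/

open Matrix

theorem Matrix.sum_kroneckerMap_mul_apply {R l m n p : Type*} [CommSemiring R]
    [Fintype l] [Fintype n] (A : Matrix l m R) (B : Matrix n p R) (c : m) (d : p) :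
    ∑ x : l × n, kroneckerMap (· * ·) A B x (c, d) = (∑ a, A a c) * ∑ b, B b d := by
  simp only [kroneckerMap_apply, Fintype.sum_prod_type, Finset.sum_mul_sum]

/-- `(b, k) ↦ 2 ^ n * b + k`, the index splitting in the recursion defining `polarG`. -/
def polarIdx (n : ℕ) : Fin 2 × Fin (2 ^ n) ≃ Fin (2 ^ (n + 1)) :=
  finProdFinEquiv.trans (finCongr (by ring))

theorem polarG_succ_apply_s8 (n : ℕ) (x y : Fin 2 × Fin (2 ^ n)) :
    polarG (n + 1) (polarIdx n x) (polarIdx n y)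
      = kroneckerMap (· * ·) polarF (polarG n) x y := by
  simp [polarG, polarIdx]

theorem polarIdx_one_lastIdx (n : ℕ) : polarIdx n (1, lastIdx n) = lastIdx (n + 1) := by
  ext
  change 2 ^ n - 1 + 2 ^ n * 1 = 2 ^ (n + 1) - 1
  have := Nat.two_pow_pos n
  rw [pow_succ]
  omega

theorem sum_polarF_apply (c : Fin 2) : ∑ a, polarF a c = if c = 1 then 1 else 0 := by
  fin_cases c <;> decide

theorem sum_polarG_apply (n : ℕ) (j : Fin (2 ^ n)) :
    ∑ i, polarG n i j = if j = lastIdx n then 1 else 0 := by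
  induction n with
  | zero =>
    have hj : j = lastIdx 0 := Fin.ext (by simp [lastIdx])
    subst hj
    rw [if_pos rfl, Fintype.sum_eq_single (lastIdx 0) fun i hi => absurd (Fin.ext (by omega)) hi]
    exact one_apply_eq _
  | succ n ih =>
    obtain ⟨⟨c, d⟩, rfl⟩ := (polarIdx n).surjective j
    rw [← (polarIdx n).sum_comp]
    simp only [polarG_succ_apply_s8, sum_kroneckerMap_mul_apply, sum_polarF_apply, ih,
      ite_zero_mul_ite_zero, mul_one, ← polarIdx_one_lastIdx, (polarIdx n).apply_eq_iff_eq,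
      Prod.mk.injEq]

theorem sum_ite_mem_mul_eq_sum {ι R : Type*} [Fintype ι] [DecidableEq ι] [NonAssocSemiring R]
    (A : Finset ι) (f : ι → R) (hf : ∀ i ∉ A, f i = 0) :
    ∑ i, (if i ∈ A then 1 else 0) * f i = ∑ i, f i := by
  refine Finset.sum_congr rfl fun i _ => ?_
  by_cases hi : i ∈ A <;> simp [hi, hf]

theorem polarG_all_errors_cancel_general (n : ℕ) (A : Finset (Fin (2 ^ n)))
    (hlast : lastIdx n ∈ A)
    (hA : ∀ j ∈ A, ∀ i ∉ A, polarG n i j = 0) :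
    (∀ j ∈ A, j ≠ lastIdx n →
      (∑ i : Fin (2 ^ n), (if i ∈ A then (1 : ZMod 2) else 0) * polarG n i j) = 0) ∧
    (∑ i : Fin (2 ^ n), (if i ∈ A then (1 : ZMod 2) else 0) * polarG n i (lastIdx n)) = 1 ∧
    (A.filter fun j =>
      (∑ i : Fin (2 ^ n), (if i ∈ A then (1 : ZMod 2) else 0) * polarG n i j) ≠ 0).card
      = 1 := by
  have hq : ∀ j ∈ A, ∑ i, (if i ∈ A then (1 : ZMod 2) else 0) * polarG n i j
      = if j = lastIdx n then 1 else 0 := fun j hj => by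
    rw [sum_ite_mem_mul_eq_sum A _ (hA j hj), sum_polarG_apply]
  refine ⟨fun j hj hne => by rw [hq j hj, if_neg hne], by rw [hq _ hlast, if_pos rfl], ?_⟩
  have hsupp : (A.filter fun j => ∑ i, (if i ∈ A then (1 : ZMod 2) else 0) * polarG n i j ≠ 0)
      = A.filter (· = lastIdx n) :=
    Finset.filter_congr fun j hj => by rw [hq j hj]; split_ifs <;> simp [*]
  rw [hsupp, Finset.filter_eq', if_pos hlast, Finset.card_singleton]

/-- all information bits in error: let `A` contain the last index
`N-1 = 2^n - 1` and satisfy `G_{i,j} = 0` for all `j ∈ A`, `i ∉ A`. If `v` is the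
indicator vector of `A`, then `q = vG` vanishes on every `j ∈ A` other than `N-1`,
`q_{N-1} = 1`, and the Hamming weight of `q` restricted to `A` equals `1`. -/
theorem polarG_all_errors_cancel (n : ℕ) (hn : 1 ≤ n) (A : Finset (Fin (2 ^ n)))
    (hlast : lastIdx n ∈ A)
    (hA : ∀ j ∈ A, ∀ i ∉ A, polarG n i j = 0) :
    (∀ j ∈ A, j ≠ lastIdx n →
      (∑ i : Fin (2 ^ n), (if i ∈ A then (1 : ZMod 2) else 0) * polarG n i j) = 0) ∧
    (∑ i : Fin (2 ^ n), (if i ∈ A then (1 : ZMod 2) else 0) * polarG n i (lastIdx n)) = 1 ∧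
    (A.filter fun j =>
      (∑ i : Fin (2 ^ n), (if i ∈ A then (1 : ZMod 2) else 0) * polarG n i j) ≠ 0).card
      = 1 :=
  polarG_all_errors_cancel_general n A hlast hA
end
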